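/- arXiv:0705.1485 — 2 statements merged into one kernel-verified Lean document; each statement's English description precedes it below -/
import Mathlib

section
/- Let k ≥ 3 and let a_n denote the number of geodesic words of length n in the dual generators {σ₁^{±1},…,σ_k^{±1}} of the dihedral Artin group A_k. Then for n ≥ 1, a_n = 2kⁿ + 2k(2k−2)^{n−1} − 2k(k−1)^{n−1}, and the geodesic growth series Σ a_n xⁿ equals (1+(3−2k)x+(2+k²−3k)x²−2k(k−1)x³) / ((1−kx)(1−2(k−1)x)(1−(k−1)x)). -/
/-- The relations `σᵢσᵢ₊₁ = σ₁σ₂` (indices mod `k`) of the dual presentation. -/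
def DualRels (k : ℕ) [NeZero k] : Set (FreeGroup (Fin k)) :=
  {x | ∃ i : Fin k, x = FreeGroup.of i * FreeGroup.of (i + 1) *
    (FreeGroup.of 0 * FreeGroup.of 1)⁻¹}

/-- The dihedral Artin group with its dual presentation
`⟨σ₁,…,σ_k ∣ σ₁σ₂ = σ₂σ₃ = ⋯ = σ_kσ₁⟩`. -/
abbrev DualArtin (k : ℕ) [NeZero k] : Type := PresentedGroup (DualRels k)

/-- The dual generator `σᵢ` (indexed by `Fin k`). -/
def sig {k : ℕ} [NeZero k] (i : Fin k) : DualArtin k := PresentedGroup.of i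

/-- The dual Garside element `δ = σ₁σ₂`. -/
def dualDelta (k : ℕ) [NeZero k] : DualArtin k := sig 0 * sig 1

/-- The dual generating set `{σ₁^{±1},…,σ_k^{±1}}`. -/
def dualGens (k : ℕ) [NeZero k] : Set (DualArtin k) :=
  {x | ∃ i : Fin k, x = sig i ∨ x = (sig i)⁻¹}

/-- Word length of `w` with respect to a generating set `S` (assumed symmetric). -/
noncomputable def wordLength {G : Type*} [Group G] (S : Set G) (w : G) : ℕ :=
  sInf {n | ∃ l : List G, l.length = n ∧ (∀ g ∈ l, g ∈ S) ∧ l.prod = w}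

/-- A word in the dual generators: `(i, true)` stands for `σᵢ`, `(i, false)` for `σᵢ⁻¹`. -/
def evalWord {k : ℕ} [NeZero k] (y : List (Fin k × Bool)) : DualArtin k :=
  (y.map fun p => if p.2 then sig p.1 else (sig p.1)⁻¹).prod

/-- A word is freely reduced if no letter is immediately followed by its inverse. -/
def FreelyReduced {k : ℕ} [NeZero k] (y : List (Fin k × Bool)) : Prop :=
  y.Chain' fun p q => ¬(q.1 = p.1 ∧ q.2 = !p.2)

/-- `dualPoss y`: the length of the longest element of `{σ₁,…,σ_k,δ}` (with the `σᵢ`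
of length 1 and `δ` of length 2) obtainable as a product of consecutive letters of `y`. -/
noncomputable def dualPoss {k : ℕ} [NeZero k] (y : List (Fin k × Bool)) : ℕ :=
  sSup ({0} ∪ {n | ∃ u : List (Fin k × Bool), u ≠ [] ∧ u.IsInfix y ∧
    ((n = 1 ∧ ∃ j : Fin k, evalWord u = sig j) ∨ (n = 2 ∧ evalWord u = dualDelta k))})

/-- `dualNegg y`: the analogue of `dualPoss` for `{σ₁⁻¹,…,σ_k⁻¹,δ⁻¹}`. -/
noncomputable def dualNegg {k : ℕ} [NeZero k] (y : List (Fin k × Bool)) : ℕ :=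
  sSup ({0} ∪ {n | ∃ u : List (Fin k × Bool), u ≠ [] ∧ u.IsInfix y ∧
    ((n = 1 ∧ ∃ j : Fin k, evalWord u = (sig j)⁻¹) ∨ (n = 2 ∧ evalWord u = (dualDelta k)⁻¹))})

/-- `y` is a geodesic word: its length equals the word length of the element it represents. -/
def IsGeodesicWord {k : ℕ} [NeZero k] (y : List (Fin k × Bool)) : Prop :=
  wordLength (dualGens k) (evalWord y) = y.length

/-- `w = δ^r w₁⋯wₛ` is a left dual normal form: the `wⱼ` are positive dual generators
and `s` is minimal among all such decompositions. -/
def IsDualLNF {k : ℕ} [NeZero k] (w : DualArtin k) (r : ℤ) (ws : List (DualArtin k)) : Prop :=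
  (∀ x ∈ ws, ∃ i : Fin k, x = sig i) ∧ w = dualDelta k ^ r * ws.prod ∧
    ∀ (r' : ℤ) (ws' : List (DualArtin k)), (∀ x ∈ ws', ∃ i : Fin k, x = sig i) →
      w = dualDelta k ^ r' * ws'.prod → ws.length ≤ ws'.length

/-!
Geodesics are read off normal forms `δ^e σ_{l₁} ⋯ σ_{lₘ}` with no consecutive pair `σᵢσᵢ₊₁`
(which would be `δ`). Left multiplication by a generator either prepends a letter or cancels the
first one; this is an action of the group on normal forms, and the word length of the element with
normal form `(e, l)` is `max m |2e + m|`, where `2e + m` is the exponent sum. Hence a word is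
geodesic iff no letter cancels while it is multiplied into normal form, or all its letters have the
same sign.

On a nonempty normal form exactly one letter of each sign cancels, so there are `2k(2k-2)ⁿ`
uncancelled words of length `n + 1`, `k(k-1)ⁿ` of them of constant sign; inclusion–exclusion with
the `2kⁿ⁺¹` words of constant sign gives `aₙ₊₁`, and the generating function follows by partial
fractions.
-/

section WordLength

variable {G : Type*} [Group G] {S : Set G}

theorem wordLength_eq_of_forall_le {w : G} {n : ℕ}
    (hw : ∃ l : List G, l.length = n ∧ (∀ g ∈ l, g ∈ S) ∧ l.prod = w)
    (hle : ∀ l : List G, (∀ g ∈ l, g ∈ S) → l.prod = w → n ≤ l.length) :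
    wordLength S w = n :=
  le_antisymm (Nat.sInf_le hw) (le_csInf ⟨n, hw⟩ fun _ ⟨l, hl, hS, hw⟩ => hl ▸ hle l hS hw)

theorem apply_prod_le_length {f : G → ℕ} (h1 : f 1 = 0) (hS : ∀ g ∈ S, ∀ w, f (g * w) ≤ f w + 1)
    {l : List G} (hl : ∀ g ∈ l, g ∈ S) : f l.prod ≤ l.length := by
  induction l with
  | nil => simp [h1]
  | cons g l ih =>
    have hg := hS g (hl g List.mem_cons_self) l.prod
    have hl := ih fun g hg => hl g (List.mem_cons_of_mem _ hg)
    rw [List.prod_cons, List.length_cons]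
    omega

theorem exists_prod_eq_mul_pow {a b : G} (ha : a ∈ S) (hb : b ∈ S) (n : ℕ) :
    ∃ l : List G, l.length = 2 * n ∧ (∀ g ∈ l, g ∈ S) ∧ l.prod = (a * b) ^ n := by
  refine ⟨(List.replicate n [a, b]).flatten, ?_, ?_, ?_⟩
  · simp [List.length_flatten, mul_comm]
  · simp only [List.mem_flatten, List.mem_replicate]
    rintro g ⟨_, ⟨-, rfl⟩, hg⟩
    simp only [List.mem_cons, List.not_mem_nil, or_false] at hg
    rcases hg with rfl | rfl <;> assumption
  · simp [List.prod_flatten, List.prod_replicate]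

end WordLength

namespace Set

variable {α : Type*}

theorem ncard_setOf_and_snd_eq {β : Type*} (Q : α × β → Prop) (b : β) :
    {p : α × β | Q p ∧ p.2 = b}.ncard = {a | Q (a, b)}.ncard := by
  rw [← ncard_image_of_injective {a | Q (a, b)} (Prod.mk_left_injective b)]
  congr 1
  ext ⟨a, b'⟩
  constructor
  · rintro ⟨hQ, rfl : b' = b⟩
    exact ⟨a, hQ, rfl⟩
  · rintro ⟨a, hQ, h⟩
    cases h
    exact ⟨hQ, rfl⟩

theorem ncard_setOf_snd_eq {β : Type*} (b : β) : {p : α × β | p.2 = b}.ncard = Nat.card α := by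
  simpa using ncard_setOf_and_snd_eq (fun _ => True) b

theorem ncard_setOf_prod_bool [Finite α] (Q : α × Bool → Prop) :
    {p | Q p}.ncard = {a | Q (a, true)}.ncard + {a | Q (a, false)}.ncard := by
  rw [← ncard_setOf_and_snd_eq, ← ncard_setOf_and_snd_eq, ← ncard_union_eq]
  · congr 1
    ext ⟨a, _ | _⟩ <;> simp
  · rw [disjoint_left]
    rintro p ⟨-, h⟩ ⟨-, h'⟩
    exact Bool.noConfusion (h.symm.trans h')

end Set

namespace List

variable {α : Type*}

theorem ncard_length_zero {P : List α → Prop} (hP : P []) :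
    {l : List α | l.length = 0 ∧ P l}.ncard = 1 := by
  rw [Set.ncard_eq_one]
  refine ⟨[], Set.ext fun l => ?_⟩
  simp only [Set.mem_ofPred_eq, length_eq_zero_iff, Set.mem_singleton_iff]
  exact ⟨And.left, fun h => ⟨h, h ▸ hP⟩⟩

theorem ncard_length_succ [Finite α] {P : List α → Prop} {Q : α → List α → Prop}
    (hP : ∀ a l, P (a :: l) ↔ P l ∧ Q a l) {n c : ℕ}
    (hQ : ∀ l, l.length = n → P l → {a | Q a l}.ncard = c) :
    {l : List α | l.length = n + 1 ∧ P l}.ncard = c * {l : List α | l.length = n ∧ P l}.ncard := by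
  set B := {l : List α | l.length = n ∧ P l}
  have : Finite B := (finite_length_eq α n).subset fun _ h => h.1
  have : Fintype B := Fintype.ofFinite B
  let f : (Σ l : B, {a | Q a l}) → {l : List α | l.length = n + 1 ∧ P l} := fun q =>
    ⟨q.2.1 :: q.1.1, by simp [q.1.2.1], (hP _ _).2 ⟨q.1.2.2, q.2.2⟩⟩
  have hf : f.Bijective := by
    refine ⟨fun q q' h => ?_, fun ⟨l, hl, hPl⟩ => ?_⟩
    · obtain ⟨⟨l, hl⟩, a, ha⟩ := q
      obtain ⟨⟨l', hl'⟩, a', ha'⟩ := q'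
      simp only [f, Subtype.mk.injEq, cons.injEq] at h
      obtain ⟨rfl, rfl⟩ := h
      rfl
    · obtain ⟨a, t, rfl⟩ := exists_cons_of_length_pos (by omega : 0 < l.length)
      obtain ⟨hPt, hQ⟩ := (hP a t).1 hPl
      exact ⟨⟨⟨t, by simpa using hl, hPt⟩, a, hQ⟩, rfl⟩
  rw [← Nat.card_coe_set_eq, ← Nat.card_eq_of_bijective f hf, Nat.card_sigma,
    Finset.sum_congr rfl fun (l : B) _ =>
      (Nat.card_coe_set_eq _).trans (hQ l.1 l.2.1 l.2.2), Finset.sum_const, Finset.card_univ,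
    smul_eq_mul, mul_comm, ← Nat.card_eq_fintype_card, Nat.card_coe_set_eq]

theorem ncard_length_forall_mem [Finite α] (p : α → Prop) (n : ℕ) :
    {l : List α | l.length = n ∧ ∀ a ∈ l, p a}.ncard = {a | p a}.ncard ^ n := by
  induction n with
  | zero => rw [ncard_length_zero (by simp), pow_zero]
  | succ n ih =>
    rw [ncard_length_succ (Q := fun a _ => p a) (by simp [and_comm]) fun _ _ _ => rfl, ih,
      pow_succ, mul_comm]

theorem ncard_and_forall_snd_or [Finite α] (P : List (α × Bool) → Prop) (n : ℕ) :
    {l : List (α × Bool) | l.length = n + 1 ∧ P l ∧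
        ((∀ p ∈ l, p.2 = true) ∨ ∀ p ∈ l, p.2 = false)}.ncard =
      {l : List (α × Bool) | l.length = n + 1 ∧ P l ∧ ∀ p ∈ l, p.2 = true}.ncard +
        {l : List (α × Bool) | l.length = n + 1 ∧ P l ∧ ∀ p ∈ l, p.2 = false}.ncard := by
  have hfin : ∀ Q : List (α × Bool) → Prop, {l | l.length = n + 1 ∧ Q l}.Finite :=
    fun Q => (finite_length_eq _ _).subset fun _ h => h.1
  rw [← Set.ncard_union_eq _ (hfin _) (hfin _)]
  · congr 1
    ext l
    simp only [Set.mem_union, Set.mem_ofPred_eq]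
    tauto
  · rw [Set.disjoint_left]
    rintro l ⟨hl, -, htrue⟩ ⟨-, -, hfalse⟩
    obtain ⟨p, t, rfl⟩ := exists_cons_of_length_pos (by omega : 0 < l.length)
    simpa [htrue p mem_cons_self] using hfalse p mem_cons_self

end List

namespace PowerSeries

theorem one_sub_C_mul_X_mul_mk_pow {R : Type*} [CommRing R] (a : R) :
    (1 - C a * X) * mk (fun n => a ^ n) = 1 := by
  simpa [mul_comm, rescale_mk] using congrArg (rescale a) (mk_one_mul_one_sub_eq_one (S := R))

theorem mul_mk_eq_of_succ {R : Type*} [CommRing R] (K : R) (a : ℕ → R) (h0 : a 0 = 1)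
    (hsucc : ∀ n, a (n + 1) = 2 * K ^ (n + 1) + 2 * K * (2 * K - 2) ^ n - 2 * K * (K - 1) ^ n) :
    (1 - C K * X) * (1 - C (2 * (K - 1)) * X) * (1 - C (K - 1) * X) * mk a =
      1 + C (3 - 2 * K) * X + C (2 + K ^ 2 - 3 * K) * X ^ 2 - C (2 * K * (K - 1)) * X ^ 3 := by
  have ha : mk a = C 2 * mk (fun n => K ^ n) - 1 +
      X * (C (2 * K) * (mk (fun n => (2 * (K - 1)) ^ n) - mk (fun n => (K - 1) ^ n))) := by
    ext (_ | n)
    · norm_num [h0]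
    · simp only [map_add, map_sub, coeff_C_mul, coeff_succ_X_mul, coeff_mk, coeff_one, hsucc,
        Nat.succ_ne_zero, if_false]
      ring
  have hK := one_sub_C_mul_X_mul_mk_pow K
  have h2K := one_sub_C_mul_X_mul_mk_pow (2 * (K - 1))
  have hK1 := one_sub_C_mul_X_mul_mk_pow (K - 1)
  rw [ha]
  simp only [map_sub, map_add, map_mul, map_pow, map_ofNat, map_one] at hK h2K hK1 ⊢
  linear_combination (2 * (1 - 2 * (C K - 1) * X) * (1 - (C K - 1) * X)) * hK
    + (2 * C K * X * (1 - C K * X) * (1 - (C K - 1) * X)) * h2K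
    - (2 * C K * X * (1 - C K * X) * (1 - 2 * (C K - 1) * X)) * hK1

end PowerSeries

namespace DualArtin

open Fin.CommRing

variable {k : ℕ} [NeZero k]

theorem sig_mul_sig_add_one (i : Fin k) : sig i * sig (i + 1) = dualDelta k :=
  PresentedGroup.mk_eq_mk_of_mul_inv_mem ⟨i, rfl⟩

theorem sig_mul_dualDelta (i : Fin k) : sig i * dualDelta k = dualDelta k * sig (i + 2) :=
  calc sig i * dualDelta k = sig i * sig (i + 1) * sig (i + 1 + 1) := by
        rw [mul_assoc, sig_mul_sig_add_one]
    _ = dualDelta k * sig (i + 2) := by rw [sig_mul_sig_add_one, add_assoc, one_add_one_eq_two]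

theorem sig_mul_dualDelta_inv (i : Fin k) :
    sig i * (dualDelta k)⁻¹ = (dualDelta k)⁻¹ * sig (i - 2) := by
  rw [mul_inv_eq_iff_eq_mul, mul_assoc, sig_mul_dualDelta, sub_add_cancel, inv_mul_cancel_left]

theorem sig_mul_dualDelta_zpow (i : Fin k) (r : ℤ) :
    sig i * dualDelta k ^ r = dualDelta k ^ r * sig (i + 2 * (r : Fin k)) := by
  induction r using Int.induction_on with
  | zero => simp
  | succ n ih =>
    rw [zpow_add_one, ← mul_assoc, ih, mul_assoc, sig_mul_dualDelta, ← mul_assoc]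
    congr 2
    push_cast
    ring
  | pred n ih =>
    rw [zpow_sub_one, ← mul_assoc, ih, mul_assoc, sig_mul_dualDelta_inv, ← mul_assoc]
    congr 2
    push_cast
    ring

theorem inv_sig (i : Fin k) : (sig i)⁻¹ = (dualDelta k)⁻¹ * sig (i - 1) := by
  rw [← sig_mul_sig_add_one (i - 1), sub_add_cancel, mul_inv_rev, inv_mul_cancel_right]

/-- `δ ^ exp * σ_{l₁} ⋯ σ_{lₘ}`; no two consecutive letters multiply to `σᵢσᵢ₊₁ = δ`. -/
@[ext]
structure NormalForm (k : ℕ) [NeZero k] where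
  exp : ℤ
  letters : List (Fin k)
  isChain : letters.IsChain fun i j => j ≠ i + 1

namespace NormalForm

def eval (x : NormalForm k) : DualArtin k := dualDelta k ^ x.exp * (x.letters.map sig).prod

def degree (x : NormalForm k) : ℤ := 2 * x.exp + x.letters.length

theorem isChain_cons {L : List (Fin k)} (hL : L.IsChain fun i j => j ≠ i + 1) {i j : Fin k}
    (h : L.head? ≠ some j) (hj : j = i + 1) : (i :: L).IsChain fun i j => j ≠ i + 1 :=
  List.isChain_cons.2 ⟨fun _ hl he => h (hj ▸ he ▸ hl), hL⟩

theorem head?_tail_ne {L : List (Fin k)} (hL : L.IsChain fun i j => j ≠ i + 1) {i : Fin k}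
    (h : L.head? = some i) : L.tail.head? ≠ some (i + 1) := by
  obtain ⟨t, rfl⟩ := List.head?_eq_some_iff.1 h
  exact fun h' => (List.isChain_cons.1 hL).1 _ h' rfl

/-- Left multiplication by `σⱼ`, using `σⱼ δ^e = δ^e σ_{j+2e}` and `σᵢ σᵢ₊₁ = δ`. -/
def sigMul (j : Fin k) (x : NormalForm k) : NormalForm k :=
  if h : x.letters.head? = some (j + 2 * x.exp + 1) then ⟨x.exp + 1, x.letters.tail, x.isChain.tail⟩
  else ⟨x.exp, (j + 2 * x.exp) :: x.letters, isChain_cons x.isChain h rfl⟩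

/-- Left multiplication by `σⱼ⁻¹`, using `σᵢ⁻¹ = δ⁻¹ σᵢ₋₁`. -/
def sigInvMul (j : Fin k) (x : NormalForm k) : NormalForm k :=
  if h : x.letters.head? = some (j + 2 * x.exp) then ⟨x.exp, x.letters.tail, x.isChain.tail⟩
  else ⟨x.exp - 1, (j + 2 * x.exp - 1) :: x.letters,
    isChain_cons x.isChain h (sub_add_cancel _ _).symm⟩

variable {j : Fin k} {x : NormalForm k}

theorem sigMul_of_head?_eq (h : x.letters.head? = some (j + 2 * x.exp + 1)) :
    sigMul j x = ⟨x.exp + 1, x.letters.tail, x.isChain.tail⟩ := dif_pos h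

theorem sigMul_of_head?_ne (h : x.letters.head? ≠ some (j + 2 * x.exp + 1)) :
    sigMul j x = ⟨x.exp, (j + 2 * x.exp) :: x.letters, isChain_cons x.isChain h rfl⟩ := dif_neg h

theorem sigInvMul_of_head?_eq (h : x.letters.head? = some (j + 2 * x.exp)) :
    sigInvMul j x = ⟨x.exp, x.letters.tail, x.isChain.tail⟩ := dif_pos h

theorem sigInvMul_of_head?_ne (h : x.letters.head? ≠ some (j + 2 * x.exp)) :
    sigInvMul j x = ⟨x.exp - 1, (j + 2 * x.exp - 1) :: x.letters,
      isChain_cons x.isChain h (sub_add_cancel _ _).symm⟩ := dif_neg h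

variable (j x)

theorem sigInvMul_sigMul : sigInvMul j (sigMul j x) = x := by
  by_cases h : x.letters.head? = some (j + 2 * x.exp + 1)
  · obtain ⟨t, ht⟩ := List.head?_eq_some_iff.1 h
    rw [sigMul_of_head?_eq h, sigInvMul_of_head?_ne]
    · ext1
      · simp
      · simp [ht]; ring
    · push_cast
      rw [show j + 2 * ((x.exp : Fin k) + 1) = j + 2 * x.exp + 1 + 1 by ring]
      exact head?_tail_ne x.isChain h
  · rw [sigMul_of_head?_ne h, sigInvMul_of_head?_eq (by simp)]
    rfl

theorem sigMul_sigInvMul : sigMul j (sigInvMul j x) = x := by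
  by_cases h : x.letters.head? = some (j + 2 * x.exp)
  · obtain ⟨t, ht⟩ := List.head?_eq_some_iff.1 h
    rw [sigInvMul_of_head?_eq h, sigMul_of_head?_ne (head?_tail_ne x.isChain h)]
    ext1
    · rfl
    · simp [ht]
  · rw [sigInvMul_of_head?_ne h, sigMul_of_head?_eq (by simp; ring)]
    ext1 <;> simp

theorem sigMul_sigMul_add_one :
    sigMul j (sigMul (j + 1) x) = ⟨x.exp + 1, x.letters, x.isChain⟩ := by
  by_cases h : x.letters.head? = some (j + 1 + 2 * x.exp + 1)
  · obtain ⟨t, ht⟩ := List.head?_eq_some_iff.1 h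
    rw [sigMul_of_head?_eq h, sigMul_of_head?_ne]
    · ext1
      · rfl
      · simp [ht]; ring
    · push_cast
      rw [show j + 2 * ((x.exp : Fin k) + 1) + 1 = j + 1 + 2 * x.exp + 1 + 1 by ring]
      exact head?_tail_ne x.isChain h
  · rw [sigMul_of_head?_ne h, sigMul_of_head?_eq (by simp; ring)]
    rfl

theorem eval_sigMul : (sigMul j x).eval = sig j * x.eval := by
  by_cases h : x.letters.head? = some (j + 2 * x.exp + 1)
  · obtain ⟨t, ht⟩ := List.head?_eq_some_iff.1 h
    rw [sigMul_of_head?_eq h]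
    simp only [eval, ht, List.tail_cons, List.map_cons, List.prod_cons]
    rw [← mul_assoc, sig_mul_dualDelta_zpow, mul_assoc, ← mul_assoc (sig _), sig_mul_sig_add_one,
      ← mul_assoc, zpow_add_one]
  · rw [sigMul_of_head?_ne h]
    simp only [eval, List.map_cons, List.prod_cons]
    rw [← mul_assoc, ← mul_assoc, sig_mul_dualDelta_zpow]

theorem degree_sigMul : (sigMul j x).degree = x.degree + 1 := by
  by_cases h : x.letters.head? = some (j + 2 * x.exp + 1)
  · obtain ⟨t, ht⟩ := List.head?_eq_some_iff.1 h
    simp only [sigMul_of_head?_eq h, degree, ht, List.tail_cons, List.length_cons]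
    push_cast
    ring
  · simp only [sigMul_of_head?_ne h, degree, List.length_cons]
    push_cast
    ring

theorem degree_sigInvMul : (sigInvMul j x).degree = x.degree - 1 := by
  by_cases h : x.letters.head? = some (j + 2 * x.exp)
  · obtain ⟨t, ht⟩ := List.head?_eq_some_iff.1 h
    simp only [sigInvMul_of_head?_eq h, degree, ht, List.tail_cons, List.length_cons]
    push_cast
    ring
  · simp only [sigInvMul_of_head?_ne h, degree, List.length_cons]
    push_cast
    ring

theorem length_sigMul : (sigMul j x).letters.length =
    if x.letters.head? = some (j + 2 * x.exp + 1) then x.letters.length - 1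
    else x.letters.length + 1 := by
  by_cases h : x.letters.head? = some (j + 2 * x.exp + 1)
  · simp [sigMul_of_head?_eq h, h]
  · simp [sigMul_of_head?_ne h, h]

theorem length_sigInvMul : (sigInvMul j x).letters.length =
    if x.letters.head? = some (j + 2 * x.exp) then x.letters.length - 1
    else x.letters.length + 1 := by
  by_cases h : x.letters.head? = some (j + 2 * x.exp)
  · simp [sigInvMul_of_head?_eq h, h]
  · simp [sigInvMul_of_head?_ne h, h]

instance : One (NormalForm k) := ⟨⟨0, [], List.IsChain.nil⟩⟩

@[simp] theorem exp_one : (1 : NormalForm k).exp = 0 := rfl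

@[simp] theorem letters_one : (1 : NormalForm k).letters = [] := rfl

theorem eval_one : (1 : NormalForm k).eval = 1 := by
  simp [eval]

def sigPerm (j : Fin k) : Equiv.Perm (NormalForm k) :=
  ⟨sigMul j, sigInvMul j, sigInvMul_sigMul j, sigMul_sigInvMul j⟩

theorem sigPerm_mul_sigPerm_add_one (i : Fin k) :
    sigPerm i * sigPerm (i + 1) = sigPerm 0 * sigPerm 1 := by
  ext1 x
  have h := sigMul_sigMul_add_one 0 x
  rw [zero_add] at h
  exact (sigMul_sigMul_add_one i x).trans h.symm

end NormalForm

open NormalForm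

def action : DualArtin k →* Equiv.Perm (NormalForm k) :=
  PresentedGroup.toGroup (f := sigPerm) <| by
    rintro _ ⟨i, rfl⟩
    simp only [map_mul, map_inv, FreeGroup.lift_apply_of, mul_inv_eq_one]
    exact sigPerm_mul_sigPerm_add_one i

theorem action_sig (i : Fin k) : action (sig i) = sigPerm i := PresentedGroup.toGroup.of _

theorem eval_action (w : DualArtin k) (x : NormalForm k) : (action w x).eval = w * x.eval := by
  have hw : w ∈ Subgroup.closure (Set.range (PresentedGroup.of (rels := DualRels k))) := by simp
  induction hw using Subgroup.closure_induction generalizing x with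
  | mem _ hg =>
    obtain ⟨i, rfl⟩ := hg
    exact eval_sigMul i x
  | one => simp
  | mul g h _ _ hg hh => rw [map_mul, Equiv.Perm.mul_apply, hg, hh, mul_assoc]
  | inv g _ hg =>
    have := hg (action g⁻¹ x)
    rw [← Equiv.Perm.mul_apply, ← map_mul, mul_inv_cancel, map_one, Equiv.Perm.one_apply] at this
    rw [this, inv_mul_cancel_left]

def normalForm (w : DualArtin k) : NormalForm k := action w 1

theorem eval_normalForm (w : DualArtin k) : (normalForm w).eval = w := by
  rw [normalForm, eval_action, eval_one, mul_one]

theorem normalForm_mul (g w : DualArtin k) : normalForm (g * w) = action g (normalForm w) := by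
  rw [normalForm, normalForm, map_mul, Equiv.Perm.mul_apply]

theorem normalForm_one : normalForm (1 : DualArtin k) = 1 := by
  simp [normalForm]

def letter (p : Fin k × Bool) : DualArtin k := if p.2 then sig p.1 else (sig p.1)⁻¹

theorem evalWord_cons (p : Fin k × Bool) (y : List (Fin k × Bool)) :
    evalWord (p :: y) = letter p * evalWord y := rfl

theorem exists_eq_letter_of_mem_dualGens {g : DualArtin k} (hg : g ∈ dualGens k) :
    ∃ p, g = letter p := by
  obtain ⟨i, rfl | rfl⟩ := hg
  exacts [⟨(i, true), rfl⟩, ⟨(i, false), rfl⟩]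

theorem action_letter (p : Fin k × Bool) (x : NormalForm k) :
    action (letter p) x = if p.2 then sigMul p.1 x else sigInvMul p.1 x := by
  obtain ⟨i, _ | _⟩ := p
  · rw [letter, if_neg Bool.false_ne_true, map_inv, action_sig]
    rfl
  · rw [letter, if_pos rfl, action_sig]
    rfl

theorem length_action_letter_le (p : Fin k × Bool) (x : NormalForm k) :
    (action (letter p) x).letters.length ≤ x.letters.length + 1 := by
  rw [action_letter]
  split_ifs
  · rw [length_sigMul]; split_ifs <;> omega
  · rw [length_sigInvMul]; split_ifs <;> omega

theorem degree_action_letter (p : Fin k × Bool) (x : NormalForm k) :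
    (action (letter p) x).degree = x.degree + if p.2 then 1 else -1 := by
  rw [action_letter]
  split_ifs
  · rw [degree_sigMul]
  · rw [degree_sigInvMul, sub_eq_add_neg]

theorem exists_length_action_letter_iff (x : NormalForm k) (b : Bool) :
    ∃ c : Fin k, ∀ j, (action (letter (j, b)) x).letters.length = x.letters.length + 1 ↔
      x.letters.head? ≠ some (j + c) := by
  cases b
  · refine ⟨2 * x.exp, fun j => ?_⟩
    rw [action_letter, if_neg Bool.false_ne_true, length_sigInvMul]
    split_ifs <;> simp_all
  · refine ⟨2 * x.exp + 1, fun j => ?_⟩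
    rw [action_letter, if_pos rfl, length_sigMul, ← add_assoc]
    split_ifs <;> simp_all

theorem inv_sig_mul_dualDelta_zpow (i : Fin k) (r : ℤ) :
    (sig i)⁻¹ * dualDelta k ^ r = dualDelta k ^ r * (sig (i + 2 * (r : Fin k)))⁻¹ := by
  rw [inv_mul_eq_iff_eq_mul, ← mul_assoc, sig_mul_dualDelta_zpow, mul_inv_cancel_right]

theorem exists_word_dualDelta_zpow (r : ℤ) : ∃ l : List (DualArtin k),
    l.length = 2 * r.natAbs ∧ (∀ g ∈ l, g ∈ dualGens k) ∧ l.prod = dualDelta k ^ r := by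
  obtain ⟨n, rfl | rfl⟩ := Int.eq_nat_or_neg r
  · simpa [dualDelta] using exists_prod_eq_mul_pow (S := dualGens k) ⟨0, .inl rfl⟩ ⟨1, .inl rfl⟩ n
  · obtain ⟨l, hlen, hgen, hprod⟩ :=
      exists_prod_eq_mul_pow (S := dualGens k) ⟨1, .inr rfl⟩ ⟨0, .inr rfl⟩ n
    refine ⟨l, by simpa using hlen, hgen, ?_⟩
    rw [hprod, ← mul_inv_rev, ← dualDelta, inv_pow, zpow_neg, zpow_natCast]

/-- `δ⁻¹ σₐ = σₐ₊₁⁻¹` lets `δ^{-t}` be absorbed into the first `t` letters. -/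
theorem exists_word_dualDelta_zpow_neg_mul (t : ℕ) (L : List (Fin k)) (ht : t ≤ L.length) :
    ∃ l : List (DualArtin k), l.length = L.length ∧ (∀ g ∈ l, g ∈ dualGens k) ∧
      l.prod = dualDelta k ^ (-t : ℤ) * (L.map sig).prod := by
  induction t generalizing L with
  | zero =>
    refine ⟨L.map sig, List.length_map _, ?_, by simp⟩
    simp only [List.mem_map]
    rintro _ ⟨i, -, rfl⟩
    exact ⟨i, .inl rfl⟩
  | succ t ih =>
    obtain ⟨a, L, rfl⟩ := List.exists_cons_of_length_pos (by omega : 0 < L.length)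
    obtain ⟨l, hlen, hgen, hprod⟩ := ih L (by simp at ht; omega)
    refine ⟨(sig (a + 2 * (t : Fin k) + 1))⁻¹ :: l, by simp [hlen], ?_, ?_⟩
    · simp only [List.mem_cons]
      rintro g (rfl | hg)
      exacts [⟨_, .inr rfl⟩, hgen g hg]
    · have key : (sig (a + 2 * (t : Fin k) + 1))⁻¹ * dualDelta k ^ (-t : ℤ) =
          dualDelta k ^ (-(t + 1 : ℕ) : ℤ) * sig a := by
        rw [inv_sig_mul_dualDelta_zpow, inv_sig, ← mul_assoc, ← zpow_sub_one]
        congr 2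
        · push_cast; ring
        · push_cast; ring
      rw [List.prod_cons, hprod, ← mul_assoc, key, List.map_cons, List.prod_cons, mul_assoc]

/-- Split `δ^exp = δ^(exp + t) δ^(-t)` with `t = min m exp⁻`: the second factor is absorbed into
the `m` letters, the first costs `2 |exp + t|` letters. -/
theorem exists_word_eval (x : NormalForm k) : ∃ l : List (DualArtin k),
    l.length = max x.letters.length x.degree.natAbs ∧ (∀ g ∈ l, g ∈ dualGens k) ∧
      l.prod = x.eval := by
  set t := min x.letters.length (-x.exp).toNat
  obtain ⟨l₁, hlen₁, hgen₁, hprod₁⟩ := exists_word_dualDelta_zpow (k := k) (x.exp + t)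
  obtain ⟨l₂, hlen₂, hgen₂, hprod₂⟩ :=
    exists_word_dualDelta_zpow_neg_mul t x.letters (min_le_left _ _)
  refine ⟨l₁ ++ l₂, ?_, ?_, ?_⟩
  · rw [List.length_append, hlen₁, hlen₂, degree]
    omega
  · simp only [List.mem_append]
    rintro g (hg | hg)
    exacts [hgen₁ g hg, hgen₂ g hg]
  · rw [List.prod_append, hprod₁, hprod₂, ← mul_assoc, ← zpow_add, add_neg_cancel_right, eval]

theorem wordLength_eq (w : DualArtin k) : wordLength (dualGens k) w =
    max (normalForm w).letters.length (normalForm w).degree.natAbs := by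
  refine wordLength_eq_of_forall_le
    (by simpa only [eval_normalForm] using exists_word_eval (normalForm w)) ?_
  rintro l hl rfl
  refine apply_prod_le_length
    (f := fun w => max (normalForm w).letters.length (normalForm w).degree.natAbs) ?_ ?_ hl
  · simp [normalForm_one, degree]
  · intro g hg w
    obtain ⟨p, rfl⟩ := exists_eq_letter_of_mem_dualGens hg
    have hlen := length_action_letter_le p (normalForm w)
    have hdeg := degree_action_letter p (normalForm w)
    simp only [normalForm_mul]
    split_ifs at hdeg <;> omega

theorem normalForm_evalWord_cons (p : Fin k × Bool) (y : List (Fin k × Bool)) :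
    normalForm (evalWord (p :: y)) = action (letter p) (normalForm (evalWord y)) := by
  rw [evalWord_cons, normalForm_mul]

theorem length_normalForm_evalWord_le (y : List (Fin k × Bool)) :
    (normalForm (evalWord y)).letters.length ≤ y.length := by
  induction y with
  | nil => simp [evalWord, normalForm_one]
  | cons p y ih =>
    have := length_action_letter_le p (normalForm (evalWord y))
    rw [normalForm_evalWord_cons, List.length_cons]
    omega

theorem degree_normalForm_evalWord (y : List (Fin k × Bool)) :
    (normalForm (evalWord y)).degree = y.countP (·.2) - y.countP (!·.2) := by
  induction y with
  | nil => simp [evalWord, normalForm_one, degree]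
  | cons p y ih =>
    rw [normalForm_evalWord_cons, degree_action_letter, ih, List.countP_cons, List.countP_cons]
    cases p.2 <;> simp <;> ring

/-- No letter cancels while `y` is multiplied, from the right, into normal form. -/
def IsUncancelled (y : List (Fin k × Bool)) : Prop :=
  (normalForm (evalWord y)).letters.length = y.length

theorem isUncancelled_nil : IsUncancelled ([] : List (Fin k × Bool)) := by
  simp [IsUncancelled, evalWord, normalForm_one]

theorem isGeodesicWord_iff (y : List (Fin k × Bool)) : IsGeodesicWord y ↔
    IsUncancelled y ∨ (∀ p ∈ y, p.2 = true) ∨ (∀ p ∈ y, p.2 = false) := by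
  have hlen := length_normalForm_evalWord_le y
  have hdeg := degree_normalForm_evalWord y
  have hcount : y.length = y.countP (·.2) + y.countP (!·.2) := by
    simpa using List.length_eq_countP_add_countP (·.2) (l := y)
  have htrue : (∀ p ∈ y, p.2 = true) ↔ y.countP (!·.2) = 0 := by simp [List.countP_eq_zero]
  have hfalse : (∀ p ∈ y, p.2 = false) ↔ y.countP (·.2) = 0 := by simp [List.countP_eq_zero]
  rw [IsGeodesicWord, wordLength_eq, IsUncancelled, htrue, hfalse]
  omega

def Extends (p : Fin k × Bool) (y : List (Fin k × Bool)) : Prop :=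
  (normalForm (evalWord (p :: y))).letters.length = (normalForm (evalWord y)).letters.length + 1

theorem isUncancelled_cons (p : Fin k × Bool) (y : List (Fin k × Bool)) :
    IsUncancelled (p :: y) ↔ IsUncancelled y ∧ Extends p y := by
  have h₁ := length_normalForm_evalWord_le y
  have h₂ := length_action_letter_le p (normalForm (evalWord y))
  rw [IsUncancelled, IsUncancelled, Extends, normalForm_evalWord_cons, List.length_cons]
  omega

theorem ncard_setOf_extends_sign {y : List (Fin k × Bool)} (hy : IsUncancelled y) (b : Bool) :
    {j : Fin k | Extends (j, b) y}.ncard = if y = [] then k else k - 1 := by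
  obtain ⟨c, hc⟩ := exists_length_action_letter_iff (normalForm (evalWord y)) b
  simp only [Extends, normalForm_evalWord_cons, hc]
  split_ifs with h
  · subst h
    simp [evalWord, normalForm_one]
  · obtain ⟨i, t, hit⟩ := List.exists_cons_of_ne_nil
      (List.ne_nil_of_length_pos (hy ▸ List.length_pos_of_ne_nil h))
    have : {j : Fin k | (normalForm (evalWord y)).letters.head? ≠ some (j + c)} = {i - c}ᶜ := by
      ext j
      simp [hit, eq_sub_iff_add_eq, eq_comm]
    rw [this, Set.ncard_compl, Set.ncard_singleton, Nat.card_eq_fintype_card, Fintype.card_fin]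

theorem ncard_setOf_extends {y : List (Fin k × Bool)} (hy : IsUncancelled y) :
    {p | Extends p y}.ncard = 2 * if y = [] then k else k - 1 := by
  rw [Set.ncard_setOf_prod_bool, ncard_setOf_extends_sign hy, ncard_setOf_extends_sign hy, two_mul]

theorem ncard_uncancelled (n : ℕ) :
    {y : List (Fin k × Bool) | y.length = n + 1 ∧ IsUncancelled y}.ncard =
      2 * k * (2 * (k - 1)) ^ n := by
  induction n with
  | zero =>
    rw [List.ncard_length_succ isUncancelled_cons fun y hy hu => by
      rw [ncard_setOf_extends hu, if_pos (List.length_eq_zero_iff.1 hy)],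
      List.ncard_length_zero isUncancelled_nil, pow_zero]
  | succ n ih =>
    rw [List.ncard_length_succ isUncancelled_cons fun y hy hu => by
      rw [ncard_setOf_extends hu, if_neg (List.ne_nil_of_length_eq_add_one hy)],
      ih]
    ring

theorem ncard_uncancelled_signed (b : Bool) (n : ℕ) :
    {y : List (Fin k × Bool) | y.length = n + 1 ∧ IsUncancelled y ∧ ∀ p ∈ y, p.2 = b}.ncard =
      k * (k - 1) ^ n := by
  have hP : ∀ (p : Fin k × Bool) y, (IsUncancelled (p :: y) ∧ ∀ q ∈ p :: y, q.2 = b) ↔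
      (IsUncancelled y ∧ ∀ q ∈ y, q.2 = b) ∧ (Extends p y ∧ p.2 = b) := by
    intro p y
    rw [isUncancelled_cons, List.forall_mem_cons]
    tauto
  have hQ : ∀ y : List (Fin k × Bool), IsUncancelled y →
      {p : Fin k × Bool | Extends p y ∧ p.2 = b}.ncard = if y = [] then k else k - 1 :=
    fun y hy => (Set.ncard_setOf_and_snd_eq _ b).trans (ncard_setOf_extends_sign hy b)
  induction n with
  | zero =>
    rw [List.ncard_length_succ hP fun y hy hu => by
      rw [hQ y hu.1, if_pos (List.length_eq_zero_iff.1 hy)],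
      List.ncard_length_zero ⟨isUncancelled_nil, by simp⟩, pow_zero]
  | succ n ih =>
    rw [List.ncard_length_succ hP fun y hy hu => by
      rw [hQ y hu.1, if_neg (List.ne_nil_of_length_eq_add_one hy)], ih]
    ring

theorem ncard_geodesic_zero :
    {y : List (Fin k × Bool) | y.length = 0 ∧ IsGeodesicWord y}.ncard = 1 :=
  List.ncard_length_zero ((isGeodesicWord_iff []).2 (.inl isUncancelled_nil))

theorem ncard_geodesic_succ (n : ℕ) :
    ({y : List (Fin k × Bool) | y.length = n + 1 ∧ IsGeodesicWord y}.ncard : ℤ) =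
      2 * k ^ (n + 1) + 2 * k * (2 * k - 2) ^ n - 2 * k * (k - 1) ^ n := by
  have hfin : ∀ P : List (Fin k × Bool) → Prop, {y | y.length = n + 1 ∧ P y}.Finite :=
    fun P => (List.finite_length_eq _ _).subset fun _ h => h.1
  have key := Set.ncard_union_add_ncard_inter _ _ (hfin IsUncancelled)
    (hfin fun y => True ∧ ((∀ p ∈ y, p.2 = true) ∨ ∀ p ∈ y, p.2 = false))
  have hunion : {y : List (Fin k × Bool) | y.length = n + 1 ∧ IsUncancelled y} ∪
      {y | y.length = n + 1 ∧ True ∧ ((∀ p ∈ y, p.2 = true) ∨ ∀ p ∈ y, p.2 = false)} =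
      {y | y.length = n + 1 ∧ IsGeodesicWord y} := by
    ext y
    simp only [Set.mem_union, Set.mem_ofPred_eq, isGeodesicWord_iff]
    tauto
  have hinter : {y : List (Fin k × Bool) | y.length = n + 1 ∧ IsUncancelled y} ∩
      {y | y.length = n + 1 ∧ True ∧ ((∀ p ∈ y, p.2 = true) ∨ ∀ p ∈ y, p.2 = false)} =
      {y | y.length = n + 1 ∧ IsUncancelled y ∧
        ((∀ p ∈ y, p.2 = true) ∨ ∀ p ∈ y, p.2 = false)} := by
    ext y
    simp only [Set.mem_inter_iff, Set.mem_ofPred_eq]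
    tauto
  rw [hunion, hinter, List.ncard_and_forall_snd_or, List.ncard_and_forall_snd_or, ncard_uncancelled,
    ncard_uncancelled_signed, ncard_uncancelled_signed] at key
  simp only [true_and, List.ncard_length_forall_mem, Set.ncard_setOf_snd_eq, Nat.card_eq_fintype_card,
    Fintype.card_fin] at key
  have key' := congrArg (Nat.cast : ℕ → ℤ) key
  push_cast [Nat.cast_sub NeZero.one_le] at key'
  linear_combination key'

end DualArtin

open PowerSeries in
theorem dual_geodesic_growth_series_general (k : ℕ) [NeZero k]
    (a : ℕ → ℕ)
    (ha : ∀ n, a n = Nat.card {y : List (Fin k × Bool) // y.length = n ∧ IsGeodesicWord y}) :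
    (∀ n, 1 ≤ n →
      (a n : ℤ) = 2 * k ^ n + 2 * k * (2 * k - 2) ^ (n - 1) - 2 * k * (k - 1) ^ (n - 1)) ∧
    (1 - C (R := ℤ) k * X) * (1 - C (R := ℤ) (2 * (k - 1)) * X) * (1 - C (R := ℤ) (k - 1) * X) *
        PowerSeries.mk (fun n => (a n : ℤ)) =
      1 + C (R := ℤ) (3 - 2 * k) * X + C (R := ℤ) (2 + k ^ 2 - 3 * k) * X ^ 2 -
        C (R := ℤ) (2 * k * (k - 1)) * X ^ 3 := by
  have hsucc : ∀ n, (a (n + 1) : ℤ) =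
      2 * k ^ (n + 1) + 2 * k * (2 * k - 2) ^ n - 2 * k * (k - 1) ^ n := fun n => by
    rw [ha]
    exact DualArtin.ncard_geodesic_succ n
  have h0 : (a 0 : ℤ) = 1 := by
    rw [ha]
    exact_mod_cast DualArtin.ncard_geodesic_zero
  refine ⟨fun n hn => ?_, mul_mk_eq_of_succ _ _ h0 hsucc⟩
  obtain ⟨m, rfl⟩ := Nat.exists_eq_add_of_le' hn
  simpa using hsucc m

open PowerSeries in
theorem dual_geodesic_growth_series (k : ℕ) [NeZero k] (hk : 3 ≤ k)
    (a : ℕ → ℕ)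
    (ha : ∀ n, a n = Nat.card {y : List (Fin k × Bool) // y.length = n ∧ IsGeodesicWord y}) :
    (∀ n, 1 ≤ n →
      (a n : ℤ) = 2 * k ^ n + 2 * k * (2 * k - 2) ^ (n - 1) - 2 * k * (k - 1) ^ (n - 1)) ∧
    (1 - C (R := ℤ) k * X) * (1 - C (R := ℤ) (2 * (k - 1)) * X) * (1 - C (R := ℤ) (k - 1) * X) *
        PowerSeries.mk (fun n => (a n : ℤ)) =
      1 + C (R := ℤ) (3 - 2 * k) * X + C (R := ℤ) (2 + k ^ 2 - 3 * k) * X ^ 2 -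
        C (R := ℤ) (2 * k * (k - 1)) * X ^ 3 :=
  dual_geodesic_growth_series_general k a ha
end

section
/- In the dihedral Artin group A_k with the Artin-generator word metric d, the sequence xₙ = prod(a,b;n) (the alternating word abab⋯ of length n) satisfies d(e,xₙ) = n for all n; that is, the alternating positive word is geodesic. -/
/-- Alternating product `prodd s t n = stst⋯` with `n` factors. -/
def prodd {G : Type*} [Monoid G] : G → G → ℕ → G
  | _, _, 0 => 1
  | s, t, n + 1 => s * prodd t s n

/-- The single relation `prod(a,b;k) = prod(b,a;k)` of the dihedral Artin group. -/
def ArtinRels (k : ℕ) : Set (FreeGroup Bool) :=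
  {prodd (FreeGroup.of true) (FreeGroup.of false) k *
    (prodd (FreeGroup.of false) (FreeGroup.of true) k)⁻¹}

/-- The Artin group of dihedral type `A_k`. -/
abbrev Artin (k : ℕ) : Type := PresentedGroup (ArtinRels k)

def Artin.a (k : ℕ) : Artin k := PresentedGroup.of true
def Artin.b (k : ℕ) : Artin k := PresentedGroup.of false

/-- The Garside element `Δ = prod(a,b;k)`. -/
def Artin.Delta (k : ℕ) : Artin k := prodd (Artin.a k) (Artin.b k) k

/-- The set `M⁺` of proper alternating positive words of length `1,…,k-1`. -/
def Mplus (k : ℕ) : Set (Artin k) :=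
  {w | ∃ i, 1 ≤ i ∧ i ≤ k - 1 ∧
    (w = prodd (Artin.a k) (Artin.b k) i ∨ w = prodd (Artin.b k) (Artin.a k) i)}

/-- The Artin generating set `{a, b, a⁻¹, b⁻¹}`. -/
def artinGens (k : ℕ) : Set (Artin k) :=
  {Artin.a k, Artin.b k, (Artin.a k)⁻¹, (Artin.b k)⁻¹}

/-- `x = Δ^r z₁⋯zₘ` is a left normal form: the factors lie in `M⁺` and the number
of factors is minimal among all such decompositions. -/
def IsLeftNF (k : ℕ) (x : Artin k) (r : ℤ) (zs : List (Artin k)) : Prop :=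
  (∀ z ∈ zs, z ∈ Mplus k) ∧ x = Artin.Delta k ^ r * zs.prod ∧
    ∀ (r' : ℤ) (zs' : List (Artin k)), (∀ z ∈ zs', z ∈ Mplus k) →
      x = Artin.Delta k ^ r' * zs'.prod → zs.length ≤ zs'.length

/-- The number of canonical factors of length `i` in the list of factors `zs`. -/
noncomputable def countLen {k : ℕ} (zs : List (Artin k)) (i : ℕ) : ℕ :=
  Nat.card {j : Fin zs.length //
    zs.get j = prodd (Artin.a k) (Artin.b k) i ∨ zs.get j = prodd (Artin.b k) (Artin.a k) i}

/-- The vector `π`: `piOf r zs j = r + m_{k-1} + ⋯ + m_{k-j}`. -/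
noncomputable def piOf (k : ℕ) (r : ℤ) (zs : List (Artin k)) (j : ℕ) : ℤ :=
  r + ∑ t ∈ Finset.range j, (countLen zs (k - 1 - t) : ℤ)


/-!
The relation `prod(a,b;k) = prod(b,a;k)` has the same number of letters on both sides, so the
exponent sum is a homomorphism `A_k → ℤ` sending `a` and `b` to `1`. A word in `a^{±1}, b^{±1}`
of length `m` has exponent sum at most `m` in absolute value, while `prod(a,b;n)` has exponent
sum `n`; the alternating word itself has length `n`.
-/

open Multiplicative

section WordLength

variable {G : Type*} [Group G] {S : Set G} {w : G}

lemma wordLength_le_length {l : List G} (hl : ∀ g ∈ l, g ∈ S) (hw : l.prod = w) :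
    wordLength S w ≤ l.length :=
  Nat.sInf_le ⟨l, rfl, hl, hw⟩

lemma le_wordLength {n : ℕ} (hw : ∃ l : List G, (∀ g ∈ l, g ∈ S) ∧ l.prod = w)
    (h : ∀ l : List G, (∀ g ∈ l, g ∈ S) → l.prod = w → n ≤ l.length) :
    n ≤ wordLength S w := by
  obtain ⟨l, hl, hlw⟩ := hw
  refine le_csInf ⟨l.length, l, rfl, hl, hlw⟩ ?_
  rintro m ⟨l', rfl, hl', hl'w⟩
  exact h l' hl' hl'w

lemma abs_toAdd_map_list_prod_le (φ : G →* Multiplicative ℤ)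
    (hS : ∀ g ∈ S, |toAdd (φ g)| ≤ 1) {l : List G} (hl : ∀ g ∈ l, g ∈ S) :
    |toAdd (φ l.prod)| ≤ l.length := by
  induction l with
  | nil => simp
  | cons g l ih =>
    rw [List.prod_cons, map_mul, toAdd_mul, List.length_cons, Nat.cast_succ, add_comm _ 1]
    exact (abs_add_le _ _).trans <| add_le_add (hS g (hl g List.mem_cons_self))
      (ih fun g hg => hl g (List.mem_cons_of_mem _ hg))

end WordLength

section Prodd

variable {G : Type*} [Monoid G]

lemma map_prodd {H : Type*} [Monoid H] (φ : G →* H) (s t : G) (n : ℕ) :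
    φ (prodd s t n) = prodd (φ s) (φ t) n := by
  induction n generalizing s t with
  | zero => simp [prodd]
  | succ n ih => simp [prodd, ih]

lemma prodd_self (s : G) (n : ℕ) : prodd s s n = s ^ n := by
  induction n with
  | zero => simp [prodd]
  | succ n ih => rw [prodd, ih, pow_succ']

lemma exists_list_prod_eq_prodd (s t : G) (n : ℕ) :
    ∃ l : List G, l.length = n ∧ (∀ g ∈ l, g = s ∨ g = t) ∧ l.prod = prodd s t n := by
  induction n generalizing s t with
  | zero => exact ⟨[], rfl, by simp, rfl⟩
  | succ n ih =>
    obtain ⟨l, hlen, hmem, hprod⟩ := ih t s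
    refine ⟨s :: l, by simp [hlen], ?_, by simp [prodd, hprod]⟩
    simp only [List.mem_cons, forall_eq_or_imp, true_or, true_and]
    exact fun g hg => (hmem g hg).symm

end Prodd

namespace Artin

noncomputable def exponentSum (k : ℕ) : Artin k →* Multiplicative ℤ :=
  PresentedGroup.toGroup (f := fun _ => ofAdd 1) <| by
    rintro r rfl
    simp [map_prodd, prodd_self]

lemma exponentSum_a (k : ℕ) : exponentSum k (a k) = ofAdd 1 :=
  PresentedGroup.toGroup.of _

lemma exponentSum_b (k : ℕ) : exponentSum k (b k) = ofAdd 1 :=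
  PresentedGroup.toGroup.of _

lemma toAdd_exponentSum_prodd (k n : ℕ) : toAdd (exponentSum k (prodd (a k) (b k) n)) = n := by
  simp [map_prodd, exponentSum_a, exponentSum_b, prodd_self]

lemma abs_toAdd_exponentSum_le_one {k : ℕ} {g : Artin k} (hg : g ∈ artinGens k) :
    |toAdd (exponentSum k g)| ≤ 1 := by
  rcases hg with rfl | rfl | rfl | rfl <;> simp [exponentSum_a, exponentSum_b]

end Artin

theorem alternating_word_is_geodesic_general (k : ℕ) (n : ℕ) :
    wordLength (artinGens k) (prodd (Artin.a k) (Artin.b k) n) = n := by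
  obtain ⟨l, hlen, hab, hprod⟩ := exists_list_prod_eq_prodd (Artin.a k) (Artin.b k) n
  have hl : ∀ g ∈ l, g ∈ artinGens k := fun g hg => by
    rcases hab g hg with rfl | rfl <;> simp [artinGens]
  refine le_antisymm ((wordLength_le_length hl hprod).trans_eq hlen)
    (le_wordLength ⟨l, hl, hprod⟩ fun l' hl' hl'prod => ?_)
  have hbound := abs_toAdd_map_list_prod_le (Artin.exponentSum k)
    (fun _ => Artin.abs_toAdd_exponentSum_le_one) hl'
  rw [hl'prod, Artin.toAdd_exponentSum_prodd, Nat.abs_cast] at hbound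
  exact_mod_cast hbound

theorem alternating_word_is_geodesic (k : ℕ) (hk : 3 ≤ k) (n : ℕ) :
    wordLength (artinGens k) (prodd (Artin.a k) (Artin.b k) n) = n :=
  alternating_word_is_geodesic_general k n
end
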